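/- arXiv:2012.04189 — 3 statements merged into one kernel-verified Lean document; each statement's English description precedes it below -/
import Mathlib

section
/- Let q be a prime power and let k ≥ 2 be an integer. The subgroup of SL_{2k}(F_q) generated by all 2×2 block matrices of the forms [[A, 0], [0, D]], [[A, A − D], [0, D]] and [[A, 0], [D − A, D]], where A, D ∈ GL_k(F_q) and det(A)·det(D) = 1, is equal to the whole group SL_{2k}(F_q). -/
open Matrix

/-!
Multiplying the generator `[[A, A - 1], [0, 1]]` by the inverse of the generator `[[A, 0], [0, 1]]`
gives `[[1, A - 1], [0, 1]]`, so the generated group contains `[[1, B], [0, 1]]` for every `B` in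
the additive span of `{A - 1 | det A = 1}`, and likewise `[[1, 0], [C, 1]]`. For `k ≥ 2` this span
is all of `M_k`: the off-diagonal matrix units come from transvections, the diagonal ones from
products of two transvections. So the group contains every elementary transvection of `SL_{2k}`
(those inside a diagonal block are block-diagonal generators) and every diagonal matrix of
determinant one, and over a field these generate `SL_{2k}`.
-/

namespace Matrix.SpecialLinearGroup

variable {n R : Type*} [Fintype n] [DecidableEq n] [CommRing R]

theorem addSubgroupClosure_range_coe_sub_one_eq_top [Nontrivial n] :
    AddSubgroup.closure
      (Set.range fun A : SpecialLinearGroup n R ↦ (A : Matrix n n R) - 1) = ⊤ := by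
  set U := AddSubgroup.closure (Set.range fun A : SpecialLinearGroup n R ↦ (A : Matrix n n R) - 1)
  have sub_one_mem (A : SpecialLinearGroup n R) : (A : Matrix n n R) - 1 ∈ U :=
    AddSubgroup.subset_closure ⟨A, rfl⟩
  have single_mem_of_ne {i j : n} (hij : i ≠ j) (c : R) : single i j c ∈ U := by
    simpa [transvection_coe] using sub_one_mem (transvection hij c)
  have single_mem (i j : n) (c : R) : single i j c ∈ U := by
    rcases eq_or_ne i j with rfl | hij
    · obtain ⟨j, hji⟩ := exists_ne i
      have hij := hji.symm
      -- `(1 + E_ij) (1 + c E_ji) - 1 = E_ij + c E_ji + c E_ii`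
      have hsingle : ((transvection hij 1 * transvection hji c : SpecialLinearGroup n R) :
          Matrix n n R) - 1 - single i j 1 - single j i c = single i i c := by
        simp [transvection_coe, mul_add, add_mul]
        abel
      rw [← hsingle]
      exact sub_mem (sub_mem (sub_one_mem _) (single_mem_of_ne hij 1)) (single_mem_of_ne hji c)
    · exact single_mem_of_ne hij c
  refine eq_top_iff.2 fun B _ ↦ ?_
  rw [matrix_eq_sum_single B]
  exact sum_mem fun i _ ↦ sum_mem fun j _ ↦ single_mem i j (B i j)

theorem apply_ofAdd_mem_of_forall_sub_one_mem [Nontrivial n] {G : Type*} [Group G]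
    (φ : Multiplicative (Matrix n n R) →* G) {H : Subgroup G}
    (hφ : ∀ A : SpecialLinearGroup n R, φ (.ofAdd ((A : Matrix n n R) - 1)) ∈ H)
    (B : Matrix n n R) : φ (.ofAdd B) ∈ H := by
  have hle : AddSubgroup.closure
      (Set.range fun A : SpecialLinearGroup n R ↦ (A : Matrix n n R) - 1) ≤
        (H.comap φ).toAddSubgroup' :=
    (AddSubgroup.closure_le _).2 (Set.range_subset_iff.2 hφ)
  rw [addSubgroupClosure_range_coe_sub_one_eq_top] at hle
  exact hle (AddSubgroup.mem_top B)

theorem eq_top_of_transvection_mem_of_diagonal_mem {ι F : Type*} [Fintype ι] [DecidableEq ι]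
    [Field F] {H : Subgroup (SpecialLinearGroup ι F)}
    (htransvec : ∀ t : TransvectionStruct ι F, t.toSpecialLinearGroup ∈ H)
    (hdiag : ∀ (d : ι → F) (hd : (diagonal d).det = 1), ⟨diagonal d, hd⟩ ∈ H) :
    H = ⊤ := by
  refine eq_top_iff.2 fun M _ ↦ ?_
  obtain ⟨L, L', d, hd, rfl⟩ := exists_list_transvec_mul_diagonal_mul_list_transvec M
  have hlist (L : List (TransvectionStruct ι F)) :
      (L.map TransvectionStruct.toSpecialLinearGroup).prod ∈ H :=
    H.list_prod_mem (List.forall_mem_map.2 fun t _ ↦ htransvec t)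
  exact mul_mem (mul_mem (hlist L) (hdiag d hd)) (hlist L')

variable (n R) in
def blockGenerators : Set (SpecialLinearGroup (n ⊕ n) R) :=
  {g | ∃ A D : Matrix n n R, IsUnit A ∧ IsUnit D ∧ A.det * D.det = 1 ∧
    ((g : Matrix (n ⊕ n) (n ⊕ n) R) = fromBlocks A 0 0 D ∨
     (g : Matrix (n ⊕ n) (n ⊕ n) R) = fromBlocks A (A - D) 0 D ∨
     (g : Matrix (n ⊕ n) (n ⊕ n) R) = fromBlocks A 0 (D - A) D)}

def blockUpperUnipotent : Multiplicative (Matrix n n R) →* SpecialLinearGroup (n ⊕ n) R where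
  toFun B := ⟨fromBlocks 1 B.toAdd 0 1, by simp⟩
  map_one' := Subtype.ext fromBlocks_one
  map_mul' B B' := Subtype.ext <| by
    change _ = fromBlocks 1 B.toAdd 0 1 * fromBlocks 1 B'.toAdd 0 1
    simp [fromBlocks_multiply, add_comm]

def blockLowerUnipotent : Multiplicative (Matrix n n R) →* SpecialLinearGroup (n ⊕ n) R where
  toFun C := ⟨fromBlocks 1 0 C.toAdd 1, by simp⟩
  map_one' := Subtype.ext fromBlocks_one
  map_mul' C C' := Subtype.ext <| by
    change _ = fromBlocks 1 0 C.toAdd 1 * fromBlocks 1 0 C'.toAdd 1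
    simp [fromBlocks_multiply, add_comm]

@[simp]
lemma coe_blockUpperUnipotent (B : Matrix n n R) :
    (blockUpperUnipotent (.ofAdd B) : Matrix (n ⊕ n) (n ⊕ n) R) = fromBlocks 1 B 0 1 :=
  rfl

@[simp]
lemma coe_blockLowerUnipotent (C : Matrix n n R) :
    (blockLowerUnipotent (.ofAdd C) : Matrix (n ⊕ n) (n ⊕ n) R) = fromBlocks 1 0 C 1 :=
  rfl

lemma mem_blockGenerators {g : SpecialLinearGroup (n ⊕ n) R} {A D : Matrix n n R}
    (hdet : A.det * D.det = 1)
    (hg : (g : Matrix (n ⊕ n) (n ⊕ n) R) = fromBlocks A 0 0 D ∨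
      (g : Matrix (n ⊕ n) (n ⊕ n) R) = fromBlocks A (A - D) 0 D ∨
      (g : Matrix (n ⊕ n) (n ⊕ n) R) = fromBlocks A 0 (D - A) D) :
    g ∈ blockGenerators n R :=
  ⟨A, D, (isUnit_iff_isUnit_det A).2 (.of_mul_eq_one _ hdet),
    (isUnit_iff_isUnit_det D).2 (.of_mul_eq_one _ ((mul_comm _ _).trans hdet)), hdet, hg⟩

lemma mem_closure_blockGenerators_of_coe_eq_fromBlocks {g : SpecialLinearGroup (n ⊕ n) R}
    {A D : Matrix n n R} (hg : (g : Matrix (n ⊕ n) (n ⊕ n) R) = fromBlocks A 0 0 D) :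
    g ∈ Subgroup.closure (blockGenerators n R) :=
  Subgroup.subset_closure <| mem_blockGenerators
    (by rw [← det_fromBlocks_zero₂₁ A 0 D, ← hg, g.2]) (.inl hg)

lemma blockUpperUnipotent_sub_one_mem_closure (A : SpecialLinearGroup n R) :
    blockUpperUnipotent (.ofAdd ((A : Matrix n n R) - 1)) ∈
      Subgroup.closure (blockGenerators n R) := by
  set d : SpecialLinearGroup (n ⊕ n) R := ⟨fromBlocks A 0 0 1, by simp⟩
  have hd : d ∈ Subgroup.closure (blockGenerators n R) :=
    mem_closure_blockGenerators_of_coe_eq_fromBlocks rfl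
  have hcoe : ((blockUpperUnipotent (.ofAdd ((A : Matrix n n R) - 1)) * d :
      SpecialLinearGroup (n ⊕ n) R) : Matrix (n ⊕ n) (n ⊕ n) R) =
        fromBlocks (A : Matrix n n R) ((A : Matrix n n R) - 1) 0 1 := by
    rw [coe_mul, coe_blockUpperUnipotent]
    simp [d, fromBlocks_multiply]
  have hg := Subgroup.subset_closure <|
    mem_blockGenerators (A := A.1) (D := 1) (by simp) (.inr (.inl hcoe))
  simpa using mul_mem hg (inv_mem hd)

lemma blockLowerUnipotent_sub_one_mem_closure (D : SpecialLinearGroup n R) :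
    blockLowerUnipotent (.ofAdd ((D : Matrix n n R) - 1)) ∈
      Subgroup.closure (blockGenerators n R) := by
  set d : SpecialLinearGroup (n ⊕ n) R := ⟨fromBlocks 1 0 0 D, by simp⟩
  have hd : d ∈ Subgroup.closure (blockGenerators n R) :=
    mem_closure_blockGenerators_of_coe_eq_fromBlocks rfl
  have hcoe : ((blockLowerUnipotent (.ofAdd ((D : Matrix n n R) - 1)) * d :
      SpecialLinearGroup (n ⊕ n) R) : Matrix (n ⊕ n) (n ⊕ n) R) =
        fromBlocks 1 0 ((D : Matrix n n R) - 1) D := by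
    rw [coe_mul, coe_blockLowerUnipotent]
    simp [d, fromBlocks_multiply]
  have hg := Subgroup.subset_closure <|
    mem_blockGenerators (A := 1) (D := D.1) (by simp) (.inr (.inr hcoe))
  simpa using mul_mem hg (inv_mem hd)

lemma transvection_mem_closure_blockGenerators [Nontrivial n]
    (t : TransvectionStruct (n ⊕ n) R) :
    t.toSpecialLinearGroup ∈ Subgroup.closure (blockGenerators n R) := by
  obtain ⟨i | i, j | j, hij, c⟩ := t
  · refine mem_closure_blockGenerators_of_coe_eq_fromBlocks
      (A := Matrix.transvection i j c) (D := 1) ?_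
    ext (a | a) (b | b) <;> simp [transvection_coe, Matrix.transvection, single, one_apply]
  · convert apply_ofAdd_mem_of_forall_sub_one_mem _
      blockUpperUnipotent_sub_one_mem_closure (single i j c)
    ext (a | a) (b | b) <;> simp [transvection_coe, single, one_apply]
  · convert apply_ofAdd_mem_of_forall_sub_one_mem _
      blockLowerUnipotent_sub_one_mem_closure (single i j c)
    ext (a | a) (b | b) <;> simp [transvection_coe, single, one_apply]
  · refine mem_closure_blockGenerators_of_coe_eq_fromBlocks
      (A := 1) (D := Matrix.transvection i j c) ?_
    ext (a | a) (b | b) <;> simp [transvection_coe, Matrix.transvection, single, one_apply]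

lemma diagonal_mem_closure_blockGenerators (d : n ⊕ n → R) (hd : (diagonal d).det = 1) :
    ⟨diagonal d, hd⟩ ∈ Subgroup.closure (blockGenerators n R) :=
  mem_closure_blockGenerators_of_coe_eq_fromBlocks (A := diagonal (d ∘ Sum.inl))
    (D := diagonal (d ∘ Sum.inr)) (by rw [fromBlocks_diagonal, Sum.elim_comp_inl_inr])

theorem closure_blockGenerators_eq_top {F : Type*} [Field F] [Nontrivial n] :
    Subgroup.closure (blockGenerators n F) = ⊤ :=
  eq_top_of_transvection_mem_of_diagonal_mem transvection_mem_closure_blockGenerators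
    diagonal_mem_closure_blockGenerators

end Matrix.SpecialLinearGroup

theorem block_generators_generate_SL_general (F : Type*) [Field F]
    (k : ℕ) (hk : 2 ≤ k) :
    Subgroup.closure
      {g : SpecialLinearGroup (Fin k ⊕ Fin k) F |
        ∃ A D : Matrix (Fin k) (Fin k) F, IsUnit A ∧ IsUnit D ∧ A.det * D.det = 1 ∧
          ((g : Matrix (Fin k ⊕ Fin k) (Fin k ⊕ Fin k) F) = fromBlocks A 0 0 D ∨
           (g : Matrix (Fin k ⊕ Fin k) (Fin k ⊕ Fin k) F) = fromBlocks A (A - D) 0 D ∨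
           (g : Matrix (Fin k ⊕ Fin k) (Fin k ⊕ Fin k) F) = fromBlocks A 0 (D - A) D)}
      = ⊤ :=
  have : Nontrivial (Fin k) := Fin.nontrivial_iff_two_le.2 hk
  SpecialLinearGroup.closure_blockGenerators_eq_top

/-- The subgroup of `SL_{2k}(F_q)` generated by the block matrices
`[[A, 0], [0, D]]`, `[[A, A - D], [0, D]]` and `[[A, 0], [D - A, D]]`, for
`A, D ∈ GL_k(F_q)` with `det A * det D = 1`, is the whole of `SL_{2k}(F_q)`. -/
theorem block_generators_generate_SL (F : Type*) [Field F] [Fintype F]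
    (k : ℕ) (hk : 2 ≤ k) :
    Subgroup.closure
      {g : SpecialLinearGroup (Fin k ⊕ Fin k) F |
        ∃ A D : Matrix (Fin k) (Fin k) F, IsUnit A ∧ IsUnit D ∧ A.det * D.det = 1 ∧
          ((g : Matrix (Fin k ⊕ Fin k) (Fin k ⊕ Fin k) F) = fromBlocks A 0 0 D ∨
           (g : Matrix (Fin k ⊕ Fin k) (Fin k ⊕ Fin k) F) = fromBlocks A (A - D) 0 D ∨
           (g : Matrix (Fin k ⊕ Fin k) (Fin k ⊕ Fin k) F) = fromBlocks A 0 (D - A) D)}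
      = ⊤ :=
  block_generators_generate_SL_general F k hk
end

section
/- Let q be a prime power and let k ≥ 2 be an integer. The subgroup of SL_{2k}(F_q) generated by all 2×2 block matrices of the forms [[A, 0], [0, D]] and [[A, 0], [D − A, D]], where A, D ∈ GL_k(F_q) and det(A)·det(D) = 1, contains the block matrix [[I, 0], [C, I]] for every k × k matrix C over F_q (where I denotes the k × k identity matrix). -/
/-!
The matrices `[[I, 0], [X, I]]` multiply by adding the `X`, so the `X` for which they lie in
the subgroup form an additive subgroup of `Matrix n n R`. It contains `I - M` for every `M` of
determinant one, because `diag(M, I)⁻¹ * [[M, 0], [I - M, I]] = [[I, 0], [I - M, I]]`. Such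
differences generate all matrices additively once `n` has two indices: `I` minus a transvection
is an off-diagonal elementary matrix, and `I - T_ij(c) T_ji(-1)` is `c • E_ii` up to those.
-/

open Matrix

namespace Matrix

variable {n R : Type*} [Fintype n] [DecidableEq n] [CommRing R]

omit [Fintype n] in
theorem one_sub_transvection (i j : n) (c : R) :
    1 - transvection i j c = single i j (-c) := by
  rw [transvection, sub_add_cancel_left, single_neg]

theorem single_diag_eq_one_sub_transvection_mul_transvection (i j : n) (c : R) :
    single i i c = (1 - transvection i j c * transvection j i (-1))
      + single i j c + single j i (-1) := by
  simp only [transvection, mul_add, add_mul, one_mul, mul_one, single_mul_single_same,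
    mul_neg_one]
  rw [← single_neg, ← single_neg]
  abel

theorem closure_one_sub_det_eq_one_eq_top [Nontrivial n] :
    AddSubgroup.closure ((1 - ·) '' {M : Matrix n n R | M.det = 1}) = ⊤ := by
  set G := AddSubgroup.closure ((1 - ·) '' {M : Matrix n n R | M.det = 1})
  have one_sub_mem {M : Matrix n n R} (hM : M.det = 1) : 1 - M ∈ G :=
    AddSubgroup.subset_closure ⟨M, hM, rfl⟩
  have single_mem {i j : n} (hij : i ≠ j) (c : R) : single i j c ∈ G := by
    simpa [one_sub_transvection] using one_sub_mem (det_transvection_of_ne i j hij (-c))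
  refine eq_top_iff.mpr fun X _ => ?_
  rw [matrix_eq_sum_single X]
  refine G.sum_mem fun i _ => G.sum_mem fun j _ => ?_
  rcases eq_or_ne i j with rfl | hij
  · obtain ⟨j, hij⟩ := exists_ne i
    rw [single_diag_eq_one_sub_transvection_mul_transvection i j]
    refine add_mem (add_mem (one_sub_mem ?_) (single_mem hij.symm _)) (single_mem hij _)
    rw [det_mul, det_transvection_of_ne _ _ hij.symm, det_transvection_of_ne _ _ hij, mul_one]
  · exact single_mem hij _

end Matrix

namespace Matrix.SpecialLinearGroup

variable {n R : Type*} [Fintype n] [DecidableEq n] [CommRing R]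

def lowerUnitriangular : Multiplicative (Matrix n n R) →* SpecialLinearGroup (n ⊕ n) R where
  toFun X := ⟨fromBlocks 1 0 X.toAdd 1, by simp⟩
  map_one' := Subtype.ext fromBlocks_one
  map_mul' X Y := Subtype.ext <| by
    change fromBlocks 1 0 (X * Y).toAdd 1 = fromBlocks 1 0 X.toAdd 1 * fromBlocks 1 0 Y.toAdd 1
    simp [fromBlocks_multiply, add_comm]

@[simp]
theorem coe_lowerUnitriangular (X : Multiplicative (Matrix n n R)) :
    (lowerUnitriangular X : Matrix (n ⊕ n) (n ⊕ n) R) = fromBlocks 1 0 X.toAdd 1 :=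
  rfl

theorem lowerUnitriangular_one_sub_eq_inv_mul {M : Matrix n n R}
    {g₁ g₂ : SpecialLinearGroup (n ⊕ n) R}
    (h₁ : (g₁ : Matrix (n ⊕ n) (n ⊕ n) R) = fromBlocks M 0 0 1)
    (h₂ : (g₂ : Matrix (n ⊕ n) (n ⊕ n) R) = fromBlocks M 0 (1 - M) 1) :
    lowerUnitriangular (.ofAdd (1 - M)) = g₁⁻¹ * g₂ := by
  rw [eq_inv_mul_iff_mul_eq]
  ext : 1
  rw [coe_mul, h₁, h₂, coe_lowerUnitriangular, toAdd_ofAdd, fromBlocks_multiply]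
  simp

theorem lowerUnitriangular_mem_of_one_sub_mem [Nontrivial n]
    {H : Subgroup (SpecialLinearGroup (n ⊕ n) R)}
    (hH : ∀ M : Matrix n n R, M.det = 1 → lowerUnitriangular (.ofAdd (1 - M)) ∈ H)
    (X : Matrix n n R) : lowerUnitriangular (.ofAdd X) ∈ H := by
  have : (H.comap lowerUnitriangular).toAddSubgroup' = ⊤ := by
    rw [eq_top_iff, ← closure_one_sub_det_eq_one_eq_top, AddSubgroup.closure_le]
    rintro _ ⟨M, hM, rfl⟩
    exact hH M hM
  simpa using this.ge (AddSubgroup.mem_top X)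

end Matrix.SpecialLinearGroup

open Matrix.SpecialLinearGroup in
theorem block_generators_contain_lower_unitriangular_general (F : Type*) [Field F]
    (k : ℕ) (hk : 2 ≤ k) (C : Matrix (Fin k) (Fin k) F) :
    ∃ g ∈ Subgroup.closure
      {g : SpecialLinearGroup (Fin k ⊕ Fin k) F |
        ∃ A D : Matrix (Fin k) (Fin k) F, IsUnit A ∧ IsUnit D ∧ A.det * D.det = 1 ∧
          ((g : Matrix (Fin k ⊕ Fin k) (Fin k ⊕ Fin k) F) = fromBlocks A 0 0 D ∨
           (g : Matrix (Fin k ⊕ Fin k) (Fin k ⊕ Fin k) F) = fromBlocks A 0 (D - A) D)},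
      (g : Matrix (Fin k ⊕ Fin k) (Fin k ⊕ Fin k) F) = fromBlocks 1 0 C 1 := by
  have : Nontrivial (Fin k) := Fin.nontrivial_iff_two_le.mpr hk
  refine ⟨lowerUnitriangular (.ofAdd C), lowerUnitriangular_mem_of_one_sub_mem (fun M hM => ?_) C,
    coe_lowerUnitriangular _⟩
  have hMu : IsUnit M := (isUnit_iff_isUnit_det M).mpr (hM ▸ isUnit_one)
  let g₁ : SpecialLinearGroup (Fin k ⊕ Fin k) F :=
    ⟨fromBlocks M 0 0 1, by simp [hM]⟩
  let g₂ : SpecialLinearGroup (Fin k ⊕ Fin k) F :=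
    ⟨fromBlocks M 0 (1 - M) 1, by simp [hM]⟩
  rw [lowerUnitriangular_one_sub_eq_inv_mul (g₁ := g₁) (g₂ := g₂) rfl rfl]
  refine mul_mem (inv_mem (Subgroup.subset_closure ?_)) (Subgroup.subset_closure ?_)
  · exact ⟨M, 1, hMu, isUnit_one, by simp [hM], .inl rfl⟩
  · exact ⟨M, 1, hMu, isUnit_one, by simp [hM], .inr rfl⟩

/-- The subgroup of `SL_{2k}(F_q)` generated by the block matrices
`[[A, 0], [0, D]]` and `[[A, 0], [D - A, D]]`, for `A, D ∈ GL_k(F_q)` with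
`det A * det D = 1`, contains `[[I, 0], [C, I]]` for every `k × k` matrix `C`. -/
theorem block_generators_contain_lower_unitriangular (F : Type*) [Field F] [Fintype F]
    (k : ℕ) (hk : 2 ≤ k) (C : Matrix (Fin k) (Fin k) F) :
    ∃ g ∈ Subgroup.closure
      {g : SpecialLinearGroup (Fin k ⊕ Fin k) F |
        ∃ A D : Matrix (Fin k) (Fin k) F, IsUnit A ∧ IsUnit D ∧ A.det * D.det = 1 ∧
          ((g : Matrix (Fin k ⊕ Fin k) (Fin k ⊕ Fin k) F) = fromBlocks A 0 0 D ∨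
           (g : Matrix (Fin k ⊕ Fin k) (Fin k ⊕ Fin k) F) = fromBlocks A 0 (D - A) D)},
      (g : Matrix (Fin k ⊕ Fin k) (Fin k ⊕ Fin k) F) = fromBlocks 1 0 C 1 :=
  block_generators_contain_lower_unitriangular_general F k hk C
end

section
/- Let q be a prime power and let n, k, i be integers with 1 ≤ k, 2k ≤ n and 0 ≤ i ≤ k − 1. Then the generalised Johnson graph J_q(n, k)_i — the simple graph whose vertices are the k-dimensional subspaces of (F_q)^n, with two subspaces x and y adjacent if and only if dim(x ∩ y) = i — is connected. -/
/-!
Two `k`-spaces `x`, `y` with `dim (x ⊓ y) ≥ i` have a common neighbour: `z = u ⊔ w`, where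
`u ≤ x ⊓ y` has dimension `i` and `w` is a `(k - i)`-space meeting both `x` and `y` trivially
(which exists as `2k ≤ n`, since a vector space is never the union of two proper subspaces).
Any `x ≠ y` can be joined to a `y'` with `dim (y' ⊓ y) = k - 1 ≥ i` and `x ⊓ y < x ⊓ y'`,
so induction on `k - dim (x ⊓ y)` connects everything.
-/

/-- The generalised Johnson graph `J_q(n, k)_i`: vertices are the `k`-dimensional
subspaces of `(F_q)^n`, and two distinct vertices are adjacent iff they intersect in an
`i`-dimensional subspace. -/
def johnsonGraph (F : Type*) [Field F] (n k i : ℕ) :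
    SimpleGraph {W : Submodule F (Fin n → F) // Module.finrank F ↥W = k} where
  Adj x y := x ≠ y ∧ Module.finrank F ↥(x.1 ⊓ y.1) = i
  symm := ⟨by
    rintro x y ⟨hne, hdim⟩
    exact ⟨hne.symm, by rwa [inf_comm]⟩⟩
  loopless := ⟨fun x h => h.1 rfl⟩

open Module Submodule

section LinearAlgebra

variable {K V : Type*} [Field K] [AddCommGroup V] [Module K V]

theorem Submodule.exists_notMem_notMem_of_ne_top {R M : Type*} [Ring R] [AddCommGroup M]
    [Module R M] {p q : Submodule R M} (hp : p ≠ ⊤) (hq : q ≠ ⊤) : ∃ a, a ∉ p ∧ a ∉ q := by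
  by_contra! h
  have hcover : ((⊤ : Submodule R M) : Set M) ⊆ p ∪ q := fun a _ => or_iff_not_imp_left.2 (h a)
  rcases AddSubgroupClass.subset_union.1 hcover with hp' | hq'
  · exact hp (top_le_iff.1 hp')
  · exact hq (top_le_iff.1 hq')

theorem Submodule.ne_top_of_finrank_lt {p : Submodule K V} (h : finrank K p < finrank K V) :
    p ≠ ⊤ := by
  rintro rfl
  simp at h

theorem Disjoint.sup_span_singleton {p w : Submodule K V} {a : V} (h : Disjoint w p)
    (ha : a ∉ p ⊔ w) : Disjoint (w ⊔ K ∙ a) p :=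
  (h.symm.disjoint_sup_right_of_disjoint_sup_left
    (disjoint_span_singleton.2 fun h => absurd h ha)).symm

variable [FiniteDimensional K V]

theorem Submodule.finrank_sup_of_disjoint {p q : Submodule K V} (h : Disjoint p q) :
    finrank K ↥(p ⊔ q) = finrank K p + finrank K q := by
  have := finrank_sup_add_finrank_inf_eq p q
  rwa [h.eq_bot, finrank_bot, add_zero] at this

theorem Submodule.exists_le_le_finrank_eq {p q : Submodule K V} (hpq : p ≤ q) {d : ℕ}
    (h₁ : finrank K p ≤ d) (h₂ : d ≤ finrank K q) :
    ∃ r : Submodule K V, p ≤ r ∧ r ≤ q ∧ finrank K r = d := by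
  induction d with
  | zero => exact ⟨p, le_rfl, hpq, by omega⟩
  | succ d ih =>
    rcases h₁.eq_or_lt with h | h
    · exact ⟨p, le_rfl, hpq, h⟩
    obtain ⟨r, hpr, hrq, hr⟩ := ih (by omega) (by omega)
    obtain ⟨a, haq, har⟩ := SetLike.exists_of_lt (lt_of_le_of_finrank_lt_finrank hrq (by omega))
    exact ⟨r ⊔ K ∙ a, le_sup_of_le_left hpr, sup_le hrq ((span_singleton_le_iff_mem a q).2 haq),
      by rw [finrank_sup_span_singleton har, hr]⟩

theorem Submodule.exists_finrank_eq_disjoint_disjoint (p q : Submodule K V) {m : ℕ}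
    (hp : finrank K p + m ≤ finrank K V) (hq : finrank K q + m ≤ finrank K V) :
    ∃ w : Submodule K V, finrank K w = m ∧ Disjoint w p ∧ Disjoint w q := by
  induction m with
  | zero => exact ⟨⊥, finrank_bot K V, disjoint_bot_left, disjoint_bot_left⟩
  | succ m ih =>
    obtain ⟨w, hw, hwp, hwq⟩ := ih (by omega) (by omega)
    have hpw : p ⊔ w ≠ ⊤ := ne_top_of_finrank_lt (by rw [finrank_sup_of_disjoint hwp.symm]; omega)
    have hqw : q ⊔ w ≠ ⊤ := ne_top_of_finrank_lt (by rw [finrank_sup_of_disjoint hwq.symm]; omega)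
    obtain ⟨a, hap, haq⟩ := exists_notMem_notMem_of_ne_top hpw hqw
    have haw : a ∉ w := fun h => hap (mem_sup_right h)
    exact ⟨w ⊔ K ∙ a, by rw [finrank_sup_span_singleton haw, hw], hwp.sup_span_singleton hap,
      hwq.sup_span_singleton haq⟩

/-- The exchange step: trade a hyperplane's worth of `y` for a vector of `x` outside `y`. -/
theorem Submodule.exists_finrank_inf_add_one_and_inf_lt {x y : Submodule K V} (hxy : ¬x ≤ y)
    (hfin : finrank K x ≤ finrank K y) :
    ∃ y' : Submodule K V, finrank K y' = finrank K y ∧ finrank K ↥(y' ⊓ y) + 1 = finrank K y ∧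
      x ⊓ y < x ⊓ y' := by
  obtain ⟨b, hbx, hby⟩ := SetLike.not_le_iff_exists.1 hxy
  have hxy_lt : finrank K ↥(x ⊓ y) < finrank K x := finrank_lt_finrank_of_lt (inf_lt_left.2 hxy)
  obtain ⟨h, hxyh, hhy, hh⟩ := exists_le_le_finrank_eq (inf_le_right : x ⊓ y ≤ y)
    (d := finrank K y - 1) (by omega) (Nat.sub_le _ _)
  have hbh : b ∉ h := fun hb => hby (hhy hb)
  have hb_disj : Disjoint (K ∙ b) y := (disjoint_span_singleton.2 fun h => absurd h hby).symm
  refine ⟨h ⊔ K ∙ b, by rw [finrank_sup_span_singleton hbh]; omega, ?_, ?_⟩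
  · rw [sup_inf_assoc_of_le _ hhy, hb_disj.eq_bot, sup_bot_eq]
    omega
  · refine SetLike.lt_iff_le_and_exists.2 ⟨le_inf inf_le_left (hxyh.trans le_sup_left), b, ?_, ?_⟩
    · exact ⟨hbx, mem_sup_right (mem_span_singleton_self b)⟩
    · exact fun hb => hby hb.2

end LinearAlgebra

section JohnsonGraph

variable {F : Type*} [Field F] {n k i : ℕ}

theorem johnsonGraph_adj_of_finrank_inf {x y : {W : Submodule F (Fin n → F) // finrank F W = k}}
    (hik : i < k) (h : finrank F ↥(x.1 ⊓ y.1) = i) : (johnsonGraph F n k i).Adj x y := by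
  refine ⟨?_, h⟩
  rintro rfl
  rw [inf_idem, x.2] at h
  omega

theorem johnsonGraph_reachable_of_le_finrank_inf (hik : i < k) (hn : 2 * k ≤ n)
    {x y : {W : Submodule F (Fin n → F) // finrank F W = k}}
    (h : i ≤ finrank F ↥(x.1 ⊓ y.1)) : (johnsonGraph F n k i).Reachable x y := by
  have hV : finrank F (Fin n → F) = n := finrank_fin_fun F
  obtain ⟨u, -, hu, hui⟩ := exists_le_le_finrank_eq bot_le (by simp) h
  obtain ⟨w, hwk, hwx, hwy⟩ := exists_finrank_eq_disjoint_disjoint x.1 y.1 (m := k - i)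
    (by rw [x.2, hV]; omega) (by rw [y.2, hV]; omega)
  have hux : u ≤ x.1 := hu.trans inf_le_left
  have huy : u ≤ y.1 := hu.trans inf_le_right
  have hzx : (u ⊔ w) ⊓ x.1 = u := by rw [sup_inf_assoc_of_le _ hux, hwx.eq_bot, sup_bot_eq]
  have hzy : (u ⊔ w) ⊓ y.1 = u := by rw [sup_inf_assoc_of_le _ huy, hwy.eq_bot, sup_bot_eq]
  let z : {W : Submodule F (Fin n → F) // finrank F W = k} :=
    ⟨u ⊔ w, by rw [finrank_sup_of_disjoint (hwx.mono_right hux).symm]; omega⟩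
  have hadj_xz : (johnsonGraph F n k i).Adj x z :=
    johnsonGraph_adj_of_finrank_inf hik (by rw [inf_comm, hzx, hui])
  have hadj_zy : (johnsonGraph F n k i).Adj z y :=
    johnsonGraph_adj_of_finrank_inf hik (by rw [hzy, hui])
  exact hadj_xz.reachable.trans hadj_zy.reachable

theorem johnsonGraph_reachable (hik : i < k) (hn : 2 * k ≤ n)
    (x y : {W : Submodule F (Fin n → F) // finrank F W = k}) :
    (johnsonGraph F n k i).Reachable x y := by
  by_cases hxy : x.1 ≤ y.1
  · rw [Subtype.ext (eq_of_le_of_finrank_eq hxy (x.2.trans y.2.symm))]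
  obtain ⟨y', hy'k, hy'y, hlt⟩ := exists_finrank_inf_add_one_and_inf_lt hxy (x.2.trans y.2.symm).le
  have hle : finrank F ↥(x.1 ⊓ y') ≤ k := (finrank_mono inf_le_left).trans x.2.le
  have hlt' := finrank_lt_finrank_of_lt hlt
  exact (johnsonGraph_reachable hik hn x ⟨y', hy'k.trans y.2⟩).trans
    (johnsonGraph_reachable_of_le_finrank_inf hik hn (by simp only at hy'y ⊢; omega))
termination_by k - finrank F ↥(x.1 ⊓ y.1)
decreasing_by omega

end JohnsonGraph

theorem johnsonGraph_connected_general (F : Type*) [Field F] (n k i : ℕ)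
    (hk : 1 ≤ k) (hn : 2 * k ≤ n) (hi : i ≤ k - 1) :
    (johnsonGraph F n k i).Connected := by
  obtain ⟨W, -, -, hW⟩ := exists_le_le_finrank_eq (bot_le : ⊥ ≤ (⊤ : Submodule F (Fin n → F)))
    (d := k) (by simp) (by rw [finrank_top, finrank_fin_fun]; omega)
  have : Nonempty {W : Submodule F (Fin n → F) // finrank F W = k} := ⟨⟨W, hW⟩⟩
  exact ⟨fun x y => johnsonGraph_reachable (by omega) hn x y⟩

/-- For `1 ≤ k`, `2k ≤ n` and `0 ≤ i ≤ k - 1`, the generalised Johnson graph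
`J_q(n, k)_i` is connected. -/
theorem johnsonGraph_connected (F : Type*) [Field F] [Fintype F] (n k i : ℕ)
    (hk : 1 ≤ k) (hn : 2 * k ≤ n) (hi : i ≤ k - 1) :
    (johnsonGraph F n k i).Connected :=
  johnsonGraph_connected_general F n k i hk hn hi
end
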